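/- Fix integers n, m, l, r, c ≥ 1, let E ∈ ℝ^{n×n}, F ∈ ℝ^{n×m}, G ∈ ℝ^{n×l}, H ∈ ℝ^{m×n}, and let (x̂, u, y) be a compensator trajectory. Set Ē = E + F H and fix t ≥ 0. Assume that (i) the observability-type matrix F̄_x = (H; HĒ; …; HĒ^{r−1}) ∈ ℝ^{mr×n} has rank n, and (ii) the (n+lr)×c matrix N whose k-th column (k = 0,…,c−1) is (x̂(t+k) ; Y_r(t+k+1)) has rank min{ n + lr , c }. Then rank(H_{r,c}(t)) = min{ (m+l)r , c , n + lr }. (Rank-equality part of Lemma 1, with the persistency-of-excitation condition on N made explicit.) -/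

import Mathlib

open Matrix

noncomputable section

namespace LQGPaper

variable {n m l : ℕ}

/-- Row block matrix `(E^{n-1}B, E^{n-2}B, …, B) ∈ ℝ^{n×nk}`. -/
def Frow {k : ℕ} (E : Matrix (Fin n) (Fin n) ℝ) (B : Matrix (Fin n) (Fin k) ℝ) :
    Matrix (Fin n) (Fin n × Fin k) ℝ :=
  Matrix.of fun i q => (E ^ (n - 1 - (q.1 : ℕ)) * B) i q.2

/-- Strictly block-lower-triangular matrix (`M̃_u`/`M̃_y` style) whose `(i,j)` block
(0-indexed, blocks of size `n × k`) is `E^{i-j-1} B` for `i > j` and `0` otherwise. -/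
def Mlow {k : ℕ} (E : Matrix (Fin n) (Fin n) ℝ) (B : Matrix (Fin n) (Fin k) ℝ) :
    Matrix (Fin n × Fin n) (Fin n × Fin k) ℝ :=
  Matrix.of fun p q =>
    if (q.1 : ℕ) < (p.1 : ℕ) then (E ^ ((p.1 : ℕ) - (q.1 : ℕ) - 1) * B) p.2 q.2 else 0

/-- Strictly block-lower-triangular matrix (`M_u`/`M_y` style) whose `(i,j)` block
(0-indexed, blocks of size `m × k`) is `H E^{i-j-1} B` for `i > j` and `0` otherwise. -/
def MlowH {k : ℕ} (E : Matrix (Fin n) (Fin n) ℝ) (B : Matrix (Fin n) (Fin k) ℝ)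
    (H : Matrix (Fin m) (Fin n) ℝ) :
    Matrix (Fin n × Fin m) (Fin n × Fin k) ℝ :=
  Matrix.of fun p q =>
    if (q.1 : ℕ) < (p.1 : ℕ) then (H * E ^ ((p.1 : ℕ) - (q.1 : ℕ) - 1) * B) p.2 q.2 else 0

/-- The block column `F_x = (H; HE; …; HE^{n-1}) ∈ ℝ^{mn×n}`. -/
def Fx (E : Matrix (Fin n) (Fin n) ℝ) (H : Matrix (Fin m) (Fin n) ℝ) :
    Matrix (Fin n × Fin m) (Fin n) ℝ :=
  Matrix.of fun p j => (H * E ^ (p.1 : ℕ)) p.2 j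

/-- The selection matrix `P_i = I_n ⊗ e_iᵀ ∈ ℝ^{n×nm}`. -/
def Pmat (n : ℕ) {m : ℕ} (i : Fin m) : Matrix (Fin n) (Fin n × Fin m) ℝ :=
  Matrix.of fun r q => if r = q.1 ∧ q.2 = i then 1 else 0

/-- The Kronecker product `a ⊗ I_q ∈ ℝ^{q×nq}` of a row vector `a ∈ ℝ^{1×n}`
with the identity `I_q`. -/
def aKron (a : Fin n → ℝ) (q : ℕ) : Matrix (Fin q) (Fin n × Fin q) ℝ :=
  Matrix.of fun i p => if i = p.2 then a p.1 else 0

/-- The row vector `a ∈ ℝ^{1×n}` as a `1 × n` matrix. -/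
def aRow (a : Fin n → ℝ) : Matrix (Fin 1) (Fin n) ℝ := Matrix.of fun _ k => a k

/-- The `i`-th row of `H` as a `1 × n` matrix. -/
def Hrow (H : Matrix (Fin m) (Fin n) ℝ) (i : Fin m) : Matrix (Fin 1) (Fin n) ℝ :=
  Matrix.of fun _ j => H i j

/-- The estimation matrix
`L_est = [[F_u − (a⊗I_n)M̃_u , F_y − (a⊗I_n)M̃_y]; [a⊗I_m , 0]] ∈ ℝ^{(n+m)×(m+l)n}`. -/
def Lest (E : Matrix (Fin n) (Fin n) ℝ) (F : Matrix (Fin n) (Fin m) ℝ)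
    (G : Matrix (Fin n) (Fin l) ℝ) (a : Fin n → ℝ) :
    Matrix (Fin n ⊕ Fin m) ((Fin n × Fin m) ⊕ (Fin n × Fin l)) ℝ :=
  Matrix.fromBlocks (Frow E F - aKron a n * Mlow E F) (Frow E G - aKron a n * Mlow E G)
    (aKron a m) 0

/-- A compensator trajectory: `x̂(t+1) = E x̂(t) + F u(t) + G y(t+1)`, `u(t) = H x̂(t)`. -/
def IsCompTraj (E : Matrix (Fin n) (Fin n) ℝ) (F : Matrix (Fin n) (Fin m) ℝ)
    (G : Matrix (Fin n) (Fin l) ℝ) (H : Matrix (Fin m) (Fin n) ℝ)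
    (xh : ℕ → Fin n → ℝ) (u : ℕ → Fin m → ℝ) (y : ℕ → Fin l → ℝ) : Prop :=
  (∀ t, xh (t + 1) = E.mulVec (xh t) + F.mulVec (u t) + G.mulVec (y (t + 1))) ∧
    ∀ t, u t = H.mulVec (xh t)

/-- The stacked vector `(v(t); v(t+1); …; v(t+r-1))`. -/
def stack {k : ℕ} (v : ℕ → Fin k → ℝ) (r t : ℕ) : Fin r × Fin k → ℝ :=
  fun p => v (t + (p.1 : ℕ)) p.2

/-- The block column `F̄_x = (H; HĒ; …; HĒ^{r-1}) ∈ ℝ^{mr×n}`. -/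
def ObsMat {n m : ℕ} (r : ℕ) (Eb : Matrix (Fin n) (Fin n) ℝ)
    (H : Matrix (Fin m) (Fin n) ℝ) : Matrix (Fin r × Fin m) (Fin n) ℝ :=
  Matrix.of fun p j => (H * Eb ^ (p.1 : ℕ)) p.2 j

/-- `F̄_y ∈ ℝ^{mr×lr}`: block matrix whose `(i,j)` block (0-indexed, blocks `m × l`)
is `H Ē^{i-j-1} G` for `i > j` and `0` otherwise. -/
def ToepMat {n m l : ℕ} (r : ℕ) (Eb : Matrix (Fin n) (Fin n) ℝ)
    (G : Matrix (Fin n) (Fin l) ℝ) (H : Matrix (Fin m) (Fin n) ℝ) :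
    Matrix (Fin r × Fin m) (Fin r × Fin l) ℝ :=
  Matrix.of fun p q =>
    if (q.1 : ℕ) < (p.1 : ℕ) then
      (H * Eb ^ ((p.1 : ℕ) - (q.1 : ℕ) - 1) * G) p.2 q.2
    else 0

/-- The input-output data matrix `H_{r,c}(t)` whose `k`-th column is
`(U_r(t+k); Y_r(t+k+1))`. -/
def dataMat {m l : ℕ} (u : ℕ → Fin m → ℝ) (y : ℕ → Fin l → ℝ) (r c t : ℕ) :
    Matrix ((Fin r × Fin m) ⊕ (Fin r × Fin l)) (Fin c) ℝ :=
  Matrix.of fun i k =>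
    Sum.elim (fun p : Fin r × Fin m => u (t + (k : ℕ) + (p.1 : ℕ)) p.2)
      (fun p : Fin r × Fin l => y (t + (k : ℕ) + 1 + (p.1 : ℕ)) p.2) i

/-- The matrix `N` whose `k`-th column is `(x̂(t+k); Y_r(t+k+1))`. -/
def stateMat {n l : ℕ} (xh : ℕ → Fin n → ℝ) (y : ℕ → Fin l → ℝ) (r c t : ℕ) :
    Matrix (Fin n ⊕ (Fin r × Fin l)) (Fin c) ℝ :=
  Matrix.of fun i k =>
    Sum.elim (fun j : Fin n => xh (t + (k : ℕ)) j)
      (fun p : Fin r × Fin l => y (t + (k : ℕ) + 1 + (p.1 : ℕ)) p.2) i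

/-!
Along a compensator trajectory the estimate follows the closed loop
`x̂(s+1) = Ē x̂(s) + G y(s+1)`, so every input window satisfies
`U_r(s) = F̄_x x̂(s) + F̄_y Y_r(s+1)`. Column by column this gives
`H_{r,c}(t) = [[F̄_x, F̄_y], [0, I]] N`. Since `F̄_x` has full column rank the left factor is
injective, so `rank H_{r,c}(t) = rank N = min(n + lr, c)`; and `n = rank F̄_x ≤ mr` turns this into
`min((m+l)r, c, n+lr)`.
-/

section Rank

variable {K α β γ : Type*} [Field K] [Fintype β] [Fintype γ]

theorem rank_mul_eq_right_of_mulVec_injective (M : Matrix α β K) (N : Matrix β γ K)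
    (hM : Function.Injective M.mulVec) : (M * N).rank = N.rank := by
  rw [Matrix.rank, Matrix.rank, mulVecLin_mul, LinearMap.range_comp]
  exact ((LinearMap.range N.mulVecLin).equivMapOfInjective _ hM).finrank_eq.symm

theorem mulVec_injective_of_rank_eq_card_width (M : Matrix α β K)
    (hM : M.rank = Fintype.card β) : Function.Injective M.mulVec := by
  have hker : Module.finrank K (LinearMap.ker M.mulVecLin) = 0 := by
    have := LinearMap.finrank_range_add_finrank_ker M.mulVecLin
    rw [← Matrix.rank, hM, Module.finrank_fintype_fun_eq_card] at this
    omega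
  exact LinearMap.ker_eq_bot.mp (Submodule.finrank_eq_zero.mp hker)

theorem fromBlocks_zero_one_mulVec_injective [DecidableEq γ] (A : Matrix α β K)
    (B : Matrix α γ K) (hA : Function.Injective A.mulVec) :
    Function.Injective (fromBlocks A B 0 (1 : Matrix γ γ K)).mulVec := by
  have hmulVec : ∀ v, fromBlocks A B 0 1 *ᵥ v =
      Sum.elim (A *ᵥ (v ∘ Sum.inl) + B *ᵥ (v ∘ Sum.inr)) (v ∘ Sum.inr) := by
    intro v
    conv_lhs => rw [← Sum.elim_comp_inl_inr v]
    simp [fromBlocks_mulVec]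
  intro v w hvw
  rw [hmulVec, hmulVec] at hvw
  have hinr := congrArg (· ∘ Sum.inr) hvw
  have hinl := congrArg (· ∘ Sum.inl) hvw
  simp only [Sum.elim_comp_inl, Sum.elim_comp_inr] at hinl hinr
  rw [hinr, add_left_inj] at hinl
  rw [← Sum.elim_comp_inl_inr v, ← Sum.elim_comp_inl_inr w, hA hinl, hinr]

end Rank

theorem pow_mulVec_add_sum_of_succ {R ι κ : Type*} [CommSemiring R] [Fintype ι] [DecidableEq ι]
    [Fintype κ] {A : Matrix ι ι R} {B : Matrix ι κ R} {x : ℕ → ι → R} {w : ℕ → κ → R}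
    (hx : ∀ s, x (s + 1) = A *ᵥ x s + B *ᵥ w (s + 1)) (s i : ℕ) :
    x (s + i) = A ^ i *ᵥ x s + ∑ j ∈ Finset.range i, (A ^ (i - j - 1) * B) *ᵥ w (s + 1 + j) := by
  induction i with
  | zero => simp
  | succ i ih =>
    have hshift : ∀ j ∈ Finset.range i,
        A *ᵥ ((A ^ (i - j - 1) * B) *ᵥ w (s + 1 + j)) =
          (A ^ (i + 1 - j - 1) * B) *ᵥ w (s + 1 + j) := by
      intro j _
      rw [mulVec_mulVec, ← Matrix.mul_assoc, ← pow_succ',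
        show i - j - 1 + 1 = i + 1 - j - 1 by grind]
    rw [← add_assoc, hx, ih, mulVec_add, mulVec_mulVec, ← pow_succ', mulVec_sum,
      Finset.sum_congr rfl hshift, Finset.sum_range_succ, add_assoc]
    simp [add_assoc, add_comm 1 i]

theorem Fin.sum_univ_ite_lt_eq_sum_range {M : Type*} [AddCommMonoid M] {r i : ℕ} (hi : i ≤ r)
    (g : ℕ → M) : ∑ q : Fin r, (if (q : ℕ) < i then g q else 0) = ∑ j ∈ Finset.range i, g j := by
  rw [Fin.sum_univ_eq_sum_range (fun j => if j < i then g j else 0), ← Finset.sum_filter]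
  congr 1
  ext j
  simp only [Finset.mem_filter, Finset.mem_range]
  omega

section Trajectory

variable {E : Matrix (Fin n) (Fin n) ℝ} {F : Matrix (Fin n) (Fin m) ℝ}
  {G : Matrix (Fin n) (Fin l) ℝ} {H : Matrix (Fin m) (Fin n) ℝ}
  {xh : ℕ → Fin n → ℝ} {u : ℕ → Fin m → ℝ} {y : ℕ → Fin l → ℝ}

theorem ObsMat_mulVec_apply (r : ℕ) (Eb : Matrix (Fin n) (Fin n) ℝ) (H : Matrix (Fin m) (Fin n) ℝ)
    (x : Fin n → ℝ) (p : Fin r × Fin m) :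
    (ObsMat r Eb H *ᵥ x) p = ((H * Eb ^ (p.1 : ℕ)) *ᵥ x) p.2 :=
  rfl

theorem ToepMat_mulVec_stack_apply (r : ℕ) (Eb : Matrix (Fin n) (Fin n) ℝ)
    (G : Matrix (Fin n) (Fin l) ℝ) (H : Matrix (Fin m) (Fin n) ℝ) (y : ℕ → Fin l → ℝ) (s : ℕ)
    (p : Fin r × Fin m) :
    (ToepMat r Eb G H *ᵥ stack y r (s + 1)) p =
      (H *ᵥ ∑ j ∈ Finset.range p.1, (Eb ^ ((p.1 : ℕ) - j - 1) * G) *ᵥ y (s + 1 + j)) p.2 := by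
  calc (ToepMat r Eb G H *ᵥ stack y r (s + 1)) p
      = ∑ q : Fin r, if (q : ℕ) < p.1 then
          ((H * Eb ^ ((p.1 : ℕ) - q - 1) * G) *ᵥ y (s + 1 + q)) p.2 else 0 := by
        simp only [Matrix.mulVec, dotProduct, Fintype.sum_prod_type, ToepMat, stack,
          of_apply, ite_mul, zero_mul, Finset.sum_ite_irrel, Finset.sum_const_zero]
    _ = ∑ j ∈ Finset.range p.1, ((H * Eb ^ ((p.1 : ℕ) - j - 1) * G) *ᵥ y (s + 1 + j)) p.2 :=
        Fin.sum_univ_ite_lt_eq_sum_range p.1.2.le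
          fun j => ((H * Eb ^ ((p.1 : ℕ) - j - 1) * G) *ᵥ y (s + 1 + j)) p.2
    _ = _ := by
        simp only [mulVec_sum, Finset.sum_apply, mulVec_mulVec, Matrix.mul_assoc]

theorem IsCompTraj.xh_succ (htraj : IsCompTraj E F G H xh u y) (s : ℕ) :
    xh (s + 1) = (E + F * H) *ᵥ xh s + G *ᵥ y (s + 1) := by
  rw [htraj.1, htraj.2, add_mulVec, mulVec_mulVec]

theorem IsCompTraj.stack_u_eq (htraj : IsCompTraj E F G H xh u y) (r s : ℕ) :
    stack u r s =
      ObsMat r (E + F * H) H *ᵥ xh s + ToepMat r (E + F * H) G H *ᵥ stack y r (s + 1) := by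
  funext p
  rw [Pi.add_apply, ObsMat_mulVec_apply, ToepMat_mulVec_stack_apply, ← Pi.add_apply,
    ← mulVec_mulVec, ← mulVec_add, ← pow_mulVec_add_sum_of_succ htraj.xh_succ]
  exact congrFun (htraj.2 _) p.2

theorem IsCompTraj.dataMat_eq (htraj : IsCompTraj E F G H xh u y) (r c t : ℕ) :
    dataMat u y r c t =
      fromBlocks (ObsMat r (E + F * H) H) (ToepMat r (E + F * H) G H) 0 1 *
        stateMat xh y r c t := by
  ext i k
  change Sum.elim (stack u r (t + k)) (stack y r (t + k + 1)) i =
    (fromBlocks _ _ 0 1 *ᵥ Sum.elim (xh (t + k)) (stack y r (t + k + 1))) i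
  simp only [fromBlocks_mulVec, Sum.elim_comp_inl, Sum.elim_comp_inr, zero_mulVec,
    one_mulVec, zero_add, ← htraj.stack_u_eq]

end Trajectory

theorem data_matrix_rank_eq_general (n m l r c : ℕ)
    (E : Matrix (Fin n) (Fin n) ℝ) (F : Matrix (Fin n) (Fin m) ℝ)
    (G : Matrix (Fin n) (Fin l) ℝ) (H : Matrix (Fin m) (Fin n) ℝ)
    (xh : ℕ → Fin n → ℝ) (u : ℕ → Fin m → ℝ) (y : ℕ → Fin l → ℝ)
    (htraj : IsCompTraj E F G H xh u y) (t : ℕ)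
    (hobs : (ObsMat r (E + F * H) H).rank = n)
    (hN : (stateMat xh y r c t).rank = min (n + l * r) c) :
    (dataMat u y r c t).rank = min ((m + l) * r) (min c (n + l * r)) := by
  have hObs_inj : Function.Injective (ObsMat r (E + F * H) H).mulVec :=
    mulVec_injective_of_rank_eq_card_width _ (by rw [hobs, Fintype.card_fin])
  have hn_le : n ≤ r * m := by
    simpa [hobs] using (ObsMat r (E + F * H) H).rank_le_card_height
  have hsize : n + l * r ≤ (m + l) * r := by
    rw [add_mul, mul_comm m r]
    exact Nat.add_le_add_right hn_le _
  rw [htraj.dataMat_eq, rank_mul_eq_right_of_mulVec_injective _ _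
    (fromBlocks_zero_one_mulVec_injective _ _ hObs_inj), hN]
  omega

/-- rank equality part of Lemma 1. -/
theorem data_matrix_rank_eq (n m l r c : ℕ)
    (hn : 1 ≤ n) (hm : 1 ≤ m) (hl : 1 ≤ l) (hr : 1 ≤ r) (hc : 1 ≤ c)
    (E : Matrix (Fin n) (Fin n) ℝ) (F : Matrix (Fin n) (Fin m) ℝ)
    (G : Matrix (Fin n) (Fin l) ℝ) (H : Matrix (Fin m) (Fin n) ℝ)
    (xh : ℕ → Fin n → ℝ) (u : ℕ → Fin m → ℝ) (y : ℕ → Fin l → ℝ)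
    (htraj : IsCompTraj E F G H xh u y) (t : ℕ)
    (hobs : (ObsMat r (E + F * H) H).rank = n)
    (hN : (stateMat xh y r c t).rank = min (n + l * r) c) :
    (dataMat u y r c t).rank = min ((m + l) * r) (min c (n + l * r)) :=
  data_matrix_rank_eq_general n m l r c E F G H xh u y htraj t hobs hN

end LQGPaper
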